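/- arXiv:2410.19404 — 3 statements merged into one kernel-verified Lean document; each statement's English description precedes it below -/
import Mathlib

section
/- For any compact set K ⊆ ℝ^d and any point x ∈ K, if F is a tangent of K at x (i.e. F = lim_{k→∞} λ_k(K − x) ∩ B(0,1) in the Hausdorff metric for some sequence of scales λ_k → ∞), then the pointwise Assouad dimension of K at x is at least the upper box dimension of F. -/
open Metric Set Filter

/-- The least number of closed balls of radius `r` needed to cover `E`. -/
noncomputable def coverNum {X : Type*} [MetricSpace X] (E : Set X) (r : ℝ) : ℕ :=
  sInf {n : ℕ | ∃ S : Finset X, S.card = n ∧ E ⊆ ⋃ c ∈ S, closedBall c r}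

/-- Pointwise Assouad dimension of `K` at `x`. -/
noncomputable def pointwiseAssouad {X : Type*} [MetricSpace X] (K : Set X) (x : X) : ℝ :=
  sInf {s : ℝ | ∃ C > (0:ℝ), ∃ ρ > (0:ℝ), ∀ r R : ℝ, 0 < r → r ≤ R → R < ρ →
    (coverNum (closedBall x R ∩ K) r : ℝ) ≤ C * (R / r) ^ s}

/-- Upper box dimension of a bounded set `F`. -/
noncomputable def upperBoxDim {X : Type*} [MetricSpace X] (F : Set X) : ℝ :=
  Filter.limsup (fun r : ℝ => Real.log (coverNum F r) / Real.log (1 / r))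
    (nhdsWithin 0 (Set.Ioi 0))

/-!
Covering numbers of `K` near `x` at relative scale `R / r` are controlled by the Assouad bound
`C (R / r) ^ s`, and this bound is invariant under the blow-ups `y ↦ λ (y - x)`. Blowing up by a
`λ_k` at which `λ_k (K - x) ∩ B(0, 1)` is `r`-close to `F`, every cover of `B(x, 1 / λ_k) ∩ K` by
balls of radius `r / λ_k` yields a cover of `F` by balls of radius `2 r`, so
`N_{2r}(F) ≤ C r ^ (-s)` for all small `r`, and hence the upper box dimension of `F` is at most `s`.
The infimum defining the pointwise Assouad dimension is not the junk `sInf ∅ = 0`: a volume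
packing argument shows that the exponent `dim E` is admissible.
-/

open Topology MeasureTheory
open scoped NNReal

section CoverNum

variable {X Y : Type*} [MetricSpace X] [MetricSpace Y] {A B F : Set X} {r δ : ℝ}

lemma coverNum_le_card {S : Finset X} (h : A ⊆ ⋃ c ∈ S, closedBall c r) : coverNum A r ≤ S.card :=
  Nat.sInf_le ⟨S, rfl, h⟩

lemma IsCompact.exists_finset_card_eq_coverNum (hA : IsCompact A) (hr : 0 < r) :
    ∃ S : Finset X, S.card = coverNum A r ∧ A ⊆ ⋃ c ∈ S, closedBall c r := by
  obtain ⟨t, -, ht, hcov⟩ := finite_cover_balls_of_compact hA hr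
  have hcov' : A ⊆ ⋃ c ∈ ht.toFinset, closedBall c r := by
    simpa only [Finite.mem_toFinset] using
      hcov.trans (iUnion₂_mono fun c _ => ball_subset_closedBall)
  exact Nat.sInf_mem (s := {n | ∃ S : Finset X, S.card = n ∧ A ⊆ ⋃ c ∈ S, closedBall c r})
    ⟨_, ht.toFinset, rfl, hcov'⟩

lemma IsCompact.one_le_coverNum (hA : IsCompact A) (hne : A.Nonempty) (hr : 0 < r) :
    1 ≤ coverNum A r := by
  obtain ⟨S, hcard, hcov⟩ := hA.exists_finset_card_eq_coverNum hr
  obtain ⟨c, hc, -⟩ := mem_iUnion₂.1 (hcov hne.some_mem)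
  exact hcard ▸ Finset.card_pos.2 ⟨c, hc⟩

lemma coverNum_mono (hB : IsCompact B) (hr : 0 < r) (hAB : A ⊆ B) :
    coverNum A r ≤ coverNum B r := by
  obtain ⟨S, hcard, hcov⟩ := hB.exists_finset_card_eq_coverNum hr
  exact hcard ▸ coverNum_le_card (hAB.trans hcov)

lemma coverNum_add_le_of_hausdorffDist_lt (hA : IsCompact A) (hr : 0 < r)
    (hfin : hausdorffEDist A F ≠ ⊤) (hδ : hausdorffDist A F < δ) :
    coverNum F (r + δ) ≤ coverNum A r := by
  obtain ⟨S, hcard, hcov⟩ := hA.exists_finset_card_eq_coverNum hr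
  refine hcard ▸ coverNum_le_card fun y hy => ?_
  obtain ⟨z, hz, hyz⟩ := exists_dist_lt_of_hausdorffDist_lt' hy hδ hfin
  obtain ⟨c, hc, hzc⟩ := mem_iUnion₂.1 (hcov hz)
  refine mem_iUnion₂.2 ⟨c, hc, ?_⟩
  rw [mem_closedBall] at hzc ⊢
  linarith [dist_triangle y z c, dist_comm y z]

lemma LipschitzWith.coverNum_image_le {K : ℝ≥0} {f : X → Y} (hf : LipschitzWith K f)
    (hA : IsCompact A) (hr : 0 < r) : coverNum (f '' A) (K * r) ≤ coverNum A r := by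
  classical
  obtain ⟨S, hcard, hcov⟩ := hA.exists_finset_card_eq_coverNum hr
  refine le_trans (coverNum_le_card (S := S.image f) ?_) (hcard ▸ Finset.card_image_le)
  rintro _ ⟨y, hy, rfl⟩
  obtain ⟨c, hc, hyc⟩ := mem_iUnion₂.1 (hcov hy)
  refine mem_iUnion₂.2 ⟨f c, Finset.mem_image_of_mem f hc, ?_⟩
  exact (hf.dist_le_mul y c).trans (mul_le_mul_of_nonneg_left hyc K.2)

lemma coverNum_le_of_card_le_of_pairwise_lt_dist (hr : 0 ≤ r) {M : ℕ}
    (hM : ∀ S : Finset X, ↑S ⊆ A → (S : Set X).Pairwise (r < dist · ·) → S.card ≤ M) :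
    coverNum A r ≤ M := by
  classical
  set cards : Set ℕ :=
    {n | ∃ S : Finset X, ↑S ⊆ A ∧ (S : Set X).Pairwise (r < dist · ·) ∧ S.card = n}
  have hbdd : BddAbove cards := ⟨M, by rintro _ ⟨S, hSA, hS, rfl⟩; exact hM S hSA hS⟩
  obtain ⟨S, hSA, hS, hcard⟩ : sSup cards ∈ cards :=
    Nat.sSup_mem ⟨0, ∅, by simp, by simp, rfl⟩ hbdd
  -- a separated set of maximal size is an `r`-net of `A`
  suffices A ⊆ ⋃ c ∈ S, closedBall c r from (coverNum_le_card this).trans (hM S hSA hS)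
  intro y hy
  by_contra hyS
  simp only [mem_iUnion, mem_closedBall, not_exists, not_le] at hyS
  have hy_notMem : y ∉ S := fun h => (hyS y h).not_ge (by simpa using hr)
  have hbigger : S.card + 1 ∈ cards := by
    refine ⟨insert y S, ?_, ?_, Finset.card_insert_of_notMem hy_notMem⟩
    · simpa only [Finset.coe_insert] using insert_subset hy hSA
    · rw [Finset.coe_insert, pairwise_insert]
      exact ⟨hS, fun c hc _ => ⟨hyS c hc, dist_comm c y ▸ hyS c hc⟩⟩
  have := le_csSup hbdd hbigger
  omega

end CoverNum

section Packing

variable {E : Type*} [NormedAddCommGroup E] [NormedSpace ℝ E] [FiniteDimensional ℝ E]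

lemma card_le_of_pairwise_lt_dist [MeasurableSpace E] [BorelSpace E] (μ : Measure E)
    [μ.IsAddHaarMeasure] {x : E} {r R : ℝ} (hr : 0 < r) (hrR : r ≤ R) {S : Finset E}
    (hS : ↑S ⊆ closedBall x R) (hsep : (S : Set E).Pairwise (r < dist · ·)) :
    (S.card : ℝ) ≤ (4 * (R / r)) ^ Module.finrank ℝ E := by
  set n := Module.finrank ℝ E
  have hR : 0 < R := hr.trans_le hrR
  have hdisj : (S : Set E).PairwiseDisjoint (ball · (r / 2)) := by
    intro a ha b hb hab
    refine disjoint_left.2 fun z hza hzb => (hsep ha hb hab).not_ge ?_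
    linarith [dist_triangle_left a b z, mem_ball.1 hza, mem_ball.1 hzb]
  have hsub : (⋃ c ∈ S, ball c (r / 2)) ⊆ ball x (2 * R) := by
    refine iUnion₂_subset fun c hc z hz => mem_ball.2 ?_
    linarith [dist_triangle z c x, mem_ball.1 hz, mem_closedBall.1 (hS hc)]
  have hvol : S.card • μ (ball 0 (r / 2)) ≤ μ (ball 0 (2 * R)) := by
    have := measure_mono (μ := μ) hsub
    rw [measure_biUnion_finset hdisj fun c _ => measurableSet_ball] at this
    simpa only [Measure.addHaar_ball_center, Finset.sum_const] using this
  rw [Measure.addHaar_ball_of_pos μ 0 (half_pos hr),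
    Measure.addHaar_ball_of_pos μ 0 (by positivity : 0 < 2 * R),
    nsmul_eq_mul, ← mul_assoc,
    ENNReal.mul_le_mul_iff_left (measure_ball_pos μ 0 one_pos).ne' measure_ball_lt_top.ne,
    ← ENNReal.ofReal_natCast, ← ENNReal.ofReal_mul (by positivity),
    ENNReal.ofReal_le_ofReal_iff (by positivity), ← le_div_iff₀ (by positivity)] at hvol
  calc (S.card : ℝ) ≤ (2 * R) ^ n / (r / 2) ^ n := hvol
    _ = (4 * (R / r)) ^ n := by rw [← div_pow]; field_simp; ring

lemma coverNum_le_of_subset_closedBall {A : Set E} {x : E} {r R : ℝ} (hr : 0 < r) (hrR : r ≤ R)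
    (hA : A ⊆ closedBall x R) : (coverNum A r : ℝ) ≤ (4 * (R / r)) ^ Module.finrank ℝ E := by
  let _ : MeasurableSpace E := borel E
  have _ : BorelSpace E := ⟨rfl⟩
  have hR : 0 ≤ R := hr.le.trans hrR
  have hM := Nat.floor_le (pow_nonneg (by positivity : (0 : ℝ) ≤ 4 * (R / r)) (Module.finrank ℝ E))
  refine le_trans ?_ hM
  exact_mod_cast coverNum_le_of_card_le_of_pairwise_lt_dist hr.le fun S hSA hS =>
    Nat.le_floor (card_le_of_pairwise_lt_dist Measure.addHaar hr hrR (hSA.trans hA) hS)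

end Packing

lemma upperBoxDim_le_of_coverNum_le {X : Type*} [MetricSpace X] {F : Set X} (hF : IsCompact F)
    (hFne : F.Nonempty) {C s : ℝ} (hC : 0 < C)
    (hcov : ∀ᶠ r in 𝓝[>] 0, (coverNum F r : ℝ) ≤ C * (1 / r) ^ s) : upperBoxDim F ≤ s := by
  have hlog : Tendsto (fun r : ℝ => Real.log (1 / r)) (𝓝[>] 0) atTop :=
    (Real.tendsto_log_atTop.comp tendsto_inv_nhdsGT_zero).congr fun r => by simp
  have hbound : Tendsto (fun r => s + Real.log C / Real.log (1 / r)) (𝓝[>] 0) (𝓝 s) := by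
    simpa using tendsto_const_nhds.add (tendsto_const_nhds.div_atTop hlog)
  have hN : ∀ᶠ r in 𝓝[>] (0 : ℝ), (1 : ℝ) ≤ coverNum F r :=
    eventually_nhdsWithin_of_forall fun r hr => by exact_mod_cast hF.one_le_coverNum hFne hr
  have hpos := hlog.eventually_gt_atTop 0
  have hle : (fun r => Real.log (coverNum F r) / Real.log (1 / r))
      ≤ᶠ[𝓝[>] 0] fun r => s + Real.log C / Real.log (1 / r) := by
    filter_upwards [self_mem_nhdsWithin, hcov, hN, hpos] with r hr hrC hr1 hrL
    have hr : 0 < r := hr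
    have : Real.log (coverNum F r) ≤ Real.log C + s * Real.log (1 / r) := by
      calc Real.log (coverNum F r) ≤ Real.log (C * (1 / r) ^ s) :=
            Real.log_le_log (by linarith) hrC
        _ = Real.log C + s * Real.log (1 / r) := by
            rw [Real.log_mul hC.ne' (by positivity), Real.log_rpow (by positivity)]
    rw [div_le_iff₀ hrL, add_mul, div_mul_cancel₀ _ hrL.ne']
    linarith
  have hcobdd : IsCoboundedUnder (· ≤ ·) (𝓝[>] (0 : ℝ))
      (fun r => Real.log (coverNum F r) / Real.log (1 / r)) :=
    isCoboundedUnder_le_of_eventually_le _ (x := 0) <| by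
      filter_upwards [hN, hpos] with r hr1 hrL using div_nonneg (Real.log_nonneg hr1) hrL.le
  exact (limsup_le_limsup hle hcobdd hbound.isBoundedUnder_le).trans_eq hbound.limsup_eq

/-- `pointwiseAssouad K x` is the infimum of the exponents `s` with `IsAssouadExponentAt K x s`. -/
def IsAssouadExponentAt {X : Type*} [MetricSpace X] (K : Set X) (x : X) (s : ℝ) : Prop :=
  ∃ C > (0 : ℝ), ∃ ρ > (0 : ℝ), ∀ r R : ℝ, 0 < r → r ≤ R → R < ρ →
    (coverNum (closedBall x R ∩ K) r : ℝ) ≤ C * (R / r) ^ s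

section Tangent

variable {E : Type*} [NormedAddCommGroup E] [NormedSpace ℝ E]

lemma isAssouadExponentAt_finrank [FiniteDimensional ℝ E] (K : Set E) (x : E) :
    IsAssouadExponentAt K x (Module.finrank ℝ E) := by
  refine ⟨4 ^ Module.finrank ℝ E, by positivity, 1, one_pos, fun r R hr hrR _ => ?_⟩
  rw [Real.rpow_natCast, ← mul_pow]
  exact coverNum_le_of_subset_closedBall hr hrR inter_subset_left

lemma coverNum_two_mul_le_of_tendsto_hausdorffDist {K F : Set E} {x : E} (hK : IsCompact K)
    (hx : x ∈ K) (hF : Bornology.IsBounded F) (hFne : F.Nonempty) {lam : ℕ → ℝ}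
    (hlam : Tendsto lam atTop atTop)
    (hconv : Tendsto
      (fun k => hausdorffDist ((fun y => lam k • (y - x)) '' K ∩ closedBall 0 1) F)
      atTop (𝓝 0))
    {C ρ s : ℝ} (hρ : 0 < ρ) (hs : ∀ r R : ℝ, 0 < r → r ≤ R → R < ρ →
      (coverNum (closedBall x R ∩ K) r : ℝ) ≤ C * (R / r) ^ s)
    {r : ℝ} (hr : 0 < r) (hr1 : r ≤ 1) :
    (coverNum F (2 * r) : ℝ) ≤ C * (1 / r) ^ s := by
  obtain ⟨k, hk_lam, hk_dist⟩ :=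
    ((hlam.eventually_gt_atTop (max ρ⁻¹ 1)).and (hconv.eventually_lt_const hr)).exists
  set l := lam k
  have hl : 0 < l := one_pos.trans_le (le_max_right _ _) |>.trans hk_lam
  have hlρ : l⁻¹ < ρ := inv_lt_of_inv_lt₀ hρ ((le_max_left _ _).trans_lt hk_lam)
  set T : E → E := fun y => l • (y - x)
  have hT : LipschitzWith ‖l‖₊ T := LipschitzWith.of_dist_le_mul fun a b => by
    simp [T, dist_smul₀]
  set A := T '' K ∩ closedBall 0 1
  have hA : IsCompact A := (hK.image hT.continuous).inter_right isClosed_closedBall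
  have hE : IsCompact (closedBall x l⁻¹ ∩ K) := hK.inter_left isClosed_closedBall
  have hAT : A ⊆ T '' (closedBall x l⁻¹ ∩ K) := by
    rintro _ ⟨⟨y, hy, rfl⟩, hTy⟩
    refine ⟨y, ⟨?_, hy⟩, rfl⟩
    rw [mem_closedBall_zero_iff, norm_smul, Real.norm_of_nonneg hl.le] at hTy
    rwa [mem_closedBall, dist_eq_norm, ← mul_one l⁻¹, le_inv_mul_iff₀ hl]
  have hfin : hausdorffEDist A F ≠ ⊤ :=
    hausdorffEDist_ne_top_of_nonempty_of_bounded ⟨T x, ⟨x, hx, rfl⟩, by simp [T]⟩ hFne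
      (isBounded_closedBall.subset inter_subset_right) hF
  calc (coverNum F (2 * r) : ℝ) ≤ coverNum A r := by
        exact_mod_cast two_mul r ▸ coverNum_add_le_of_hausdorffDist_lt hA hr hfin hk_dist
    _ ≤ coverNum (T '' (closedBall x l⁻¹ ∩ K)) r := by
        exact_mod_cast coverNum_mono (hE.image hT.continuous) hr hAT
    _ = coverNum (T '' (closedBall x l⁻¹ ∩ K)) (‖l‖₊ * (r / l)) := by
        rw [coe_nnnorm, Real.norm_of_nonneg hl.le, mul_div_cancel₀ _ hl.ne']
    _ ≤ coverNum (closedBall x l⁻¹ ∩ K) (r / l) := by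
        exact_mod_cast hT.coverNum_image_le hE (div_pos hr hl)
    _ ≤ C * (l⁻¹ / (r / l)) ^ s :=
        hs _ _ (div_pos hr hl) ((div_le_div_of_nonneg_right hr1 hl.le).trans_eq (one_div l)) hlρ
    _ = C * (1 / r) ^ s := by field_simp

end Tangent

theorem stmt0_general {d : ℕ} (K : Set (EuclideanSpace ℝ (Fin d))) (hK : IsCompact K)
    (x : EuclideanSpace ℝ (Fin d)) (hx : x ∈ K)
    (F : Set (EuclideanSpace ℝ (Fin d))) (hFc : IsCompact F) (hFne : F.Nonempty)
    (lam : ℕ → ℝ) (hlam : Tendsto lam atTop atTop)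
    (hconv : Tendsto
      (fun k => hausdorffDist ((fun y => lam k • (y - x)) '' K ∩ closedBall 0 1) F)
      atTop (nhds 0)) :
    upperBoxDim F ≤ pointwiseAssouad K x := by
  refine le_csInf ⟨_, isAssouadExponentAt_finrank K x⟩ ?_
  rintro s ⟨C, hC, ρ, hρ, hs⟩
  refine upperBoxDim_le_of_coverNum_le hFc hFne (C := C * 2 ^ s) (by positivity) ?_
  filter_upwards [Ioo_mem_nhdsGT two_pos] with r ⟨hr, hr2⟩
  have hcov := coverNum_two_mul_le_of_tendsto_hausdorffDist hK hx hFc.isBounded hFne hlam hconv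
    hρ hs (half_pos hr) (by linarith)
  rwa [mul_div_cancel₀ r two_ne_zero, one_div_div, div_eq_mul_one_div 2 r,
    Real.mul_rpow two_pos.le (by positivity), ← mul_assoc] at hcov

/-- If `F` is a tangent of a compact set `K ⊆ ℝ^d` at `x ∈ K`, then the pointwise
Assouad dimension of `K` at `x` is at least the upper box dimension of `F`. -/
theorem stmt0 {d : ℕ} (K : Set (EuclideanSpace ℝ (Fin d))) (hK : IsCompact K)
    (x : EuclideanSpace ℝ (Fin d)) (hx : x ∈ K)
    (F : Set (EuclideanSpace ℝ (Fin d))) (hFc : IsCompact F) (hFne : F.Nonempty)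
    (hFsub : F ⊆ closedBall 0 1)
    (lam : ℕ → ℝ) (hlam : Tendsto lam atTop atTop)
    (hconv : Tendsto
      (fun k => hausdorffDist ((fun y => lam k • (y - x)) '' K ∩ closedBall 0 1) F)
      atTop (nhds 0)) :
    upperBoxDim F ≤ pointwiseAssouad K x :=
  stmt0_general K hK x hx F hFc hFne lam hlam hconv
end

section
/- The equation 3^{-s} + 2·6^{-s} = 1 has a unique real solution s, and this solution satisfies 0.72 < s < 0.73. -/
/-! The map `s ↦ 3^{-s} + 2·6^{-s}` is continuous and strictly decreasing, so it takes the
value `1` exactly once, and only between two points where it is `> 1` and `< 1`. Those two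
evaluations reduce to integer inequalities: for `n·s = m`, comparing `a` with `b^{-s}` is
comparing `a^n b^m` with `1`. -/

open Real

lemma StrictAnti.existsUnique_eq_and_mem_Ioo {f : ℝ → ℝ} (hf : StrictAnti f)
    (hcont : Continuous f) {a b c : ℝ} (ha : c < f a) (hb : f b < c) :
    (∃! x, f x = c) ∧ ∀ x, f x = c → a < x ∧ x < b := by
  have hab : a ≤ b := hf.le_iff_ge.mp (hb.trans ha).le
  have hmem : ∀ x, f x = c → a < x ∧ x < b := fun x hx =>
    ⟨hf.lt_iff_gt.mp (hx ▸ ha), hf.lt_iff_gt.mp (hx ▸ hb)⟩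
  obtain ⟨x, -, hx⟩ :=
    intermediate_value_Icc' hab hcont.continuousOn ⟨hb.le, ha.le⟩
  exact ⟨⟨x, hx, fun y hy => hf.injective (hy.trans hx.symm)⟩, hmem⟩

lemma rpow_neg_pow_eq_inv_pow {b s : ℝ} {m n : ℕ} (hb : 0 < b) (hs : n * s = m) :
    (b ^ (-s)) ^ n = (b ^ m)⁻¹ := by
  rw [← rpow_natCast (b ^ (-s)), ← rpow_mul hb.le, neg_mul, mul_comm, hs,
    rpow_neg hb.le, rpow_natCast]

lemma lt_rpow_neg_of_pow_mul_pow_lt_one {a b s : ℝ} {m n : ℕ} (hb : 0 < b)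
    (hs : n * s = m) (h : a ^ n * b ^ m < 1) : a < b ^ (-s) := by
  refine lt_of_pow_lt_pow_left₀ n (rpow_nonneg hb.le _) ?_
  rwa [rpow_neg_pow_eq_inv_pow hb hs, ← one_div, lt_div_iff₀ (by positivity)]

lemma rpow_neg_lt_of_one_lt_pow_mul_pow {a b s : ℝ} {m n : ℕ} (ha : 0 ≤ a) (hb : 0 < b)
    (hs : n * s = m) (h : 1 < a ^ n * b ^ m) : b ^ (-s) < a := by
  refine lt_of_pow_lt_pow_left₀ n ha ?_
  rwa [rpow_neg_pow_eq_inv_pow hb hs, ← one_div, div_lt_iff₀ (by positivity)]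

noncomputable def moranSum (s : ℝ) : ℝ := (3 : ℝ) ^ (-s) + 2 * (6 : ℝ) ^ (-s)

lemma strictAnti_moranSum : StrictAnti moranSum := fun s t hst => by
  have h3 : (3 : ℝ) ^ (-t) < (3 : ℝ) ^ (-s) :=
    rpow_lt_rpow_of_exponent_lt (by norm_num) (by linarith)
  have h6 : (6 : ℝ) ^ (-t) < (6 : ℝ) ^ (-s) :=
    rpow_lt_rpow_of_exponent_lt (by norm_num) (by linarith)
  unfold moranSum
  linarith

lemma continuous_moranSum : Continuous moranSum := by
  unfold moranSum
  fun_prop (disch := norm_num)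

lemma one_lt_moranSum_072 : 1 < moranSum 0.72 := by
  have h3 : (0.4533 : ℝ) < (3 : ℝ) ^ (-0.72 : ℝ) :=
    lt_rpow_neg_of_pow_mul_pow_lt_one (m := 18) (n := 25) (by norm_num) (by norm_num)
      (by norm_num)
  have h6 : (0.2751 : ℝ) < (6 : ℝ) ^ (-0.72 : ℝ) :=
    lt_rpow_neg_of_pow_mul_pow_lt_one (m := 18) (n := 25) (by norm_num) (by norm_num)
      (by norm_num)
  unfold moranSum
  linarith

lemma moranSum_073_lt_one : moranSum 0.73 < 1 := by
  have h3 : (3 : ℝ) ^ (-0.73 : ℝ) < 0.449 :=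
    rpow_neg_lt_of_one_lt_pow_mul_pow (m := 73) (n := 100) (by norm_num) (by norm_num)
      (by norm_num) (by norm_num)
  have h6 : (6 : ℝ) ^ (-0.73 : ℝ) < 0.273 :=
    rpow_neg_lt_of_one_lt_pow_mul_pow (m := 73) (n := 100) (by norm_num) (by norm_num)
      (by norm_num) (by norm_num)
  unfold moranSum
  linarith

/-- The equation `3^{-s} + 2·6^{-s} = 1` has a unique real solution `s`, and this
solution satisfies `0.72 < s < 0.73`. -/
theorem stmt9 :
    (∃! s : ℝ, (3 : ℝ) ^ (-s) + 2 * (6 : ℝ) ^ (-s) = 1) ∧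
    (∀ s : ℝ, (3 : ℝ) ^ (-s) + 2 * (6 : ℝ) ^ (-s) = 1 →
      (0.72 : ℝ) < s ∧ s < (0.73 : ℝ)) :=
  strictAnti_moranSum.existsUnique_eq_and_mem_Ioo continuous_moranSum one_lt_moranSum_072
    moranSum_073_lt_one
end

section
/- Let K ⊆ ℝ² be the attractor of a Gatzouras–Lalley IFS and η the projection to the x-axis. If the projected IFS {S_{i,1}} satisfies the strong separation condition (the images S_{i,1}(η(K)) for distinct columns are pairwise disjoint), then every point x ∈ K is regular: for each r ∈ (0,1) there is a finite word 𝚒 over the alphabet with contraction a_𝚒 ≤ C·r (C independent of x, r) such that B(η(x), r) ∩ η(K) ⊆ S_{𝚒,1}(η(K)). -/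
/-!
Strong separation of the projected system gives a uniform gap `δ` between the first-level
cylinders of distinct maps. Since the maps are similarities, the gap rescales: a point of
`η(K)` within `δ a_w` of the cylinder `S_w(η(K))` lies in it. Following the coding of `η(x)`
down to the first generation with `a_w` comparable to `r / δ` then gives the word.
-/

open Metric Set Filter Topology

section WordMap

variable {X I : Type*}

def wordMap (f : I → X → X) (w : List I) : X → X := w.foldr (fun i g => f i ∘ g) id

@[simp] lemma wordMap_nil (f : I → X → X) : wordMap f [] = id := rfl

@[simp] lemma wordMap_cons (f : I → X → X) (i : I) (w : List I) :
    wordMap f (i :: w) = f i ∘ wordMap f w := rfl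

lemma image_wordMap_subset {f : I → X → X} {E : Set X} (hE : ∀ i, f i '' E ⊆ E) (w : List I) :
    wordMap f w '' E ⊆ E := by
  induction w with
  | nil => simp
  | cons i w ih => rw [wordMap_cons, image_comp]; exact (image_mono ih).trans (hE i)

end WordMap

lemma List.prod_map_le_one {ι R : Type*} [CommMonoidWithZero R] [PartialOrder R]
    [ZeroLEOneClass R] [PosMulMono R] {a : ι → R} (ha0 : ∀ i, 0 ≤ a i) (ha1 : ∀ i, a i ≤ 1)
    (w : List ι) : (w.map a).prod ≤ 1 := by
  simpa using List.prod_map_le_prod_map₀ a (fun _ => 1) (fun i _ => ha0 i) (fun i _ => ha1 i)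

section Cylinders

variable {X I : Type*} {f : I → X → X} {a : I → ℝ} {E : Set X}

-- `n` bounds the length of the descent: each step divides `s` by some `a j ≤ M`.
lemma exists_mem_image_wordMap_of_pow_lt (hE : E ⊆ ⋃ i, f i '' E) (ha : ∀ i, 0 < a i)
    {m M : ℝ} (hm : ∀ i, m ≤ a i) (hM : ∀ i, a i ≤ M) :
    ∀ (n : ℕ) {y : X}, y ∈ E → ∀ {s : ℝ}, 0 < s → s ≤ 1 → M ^ n < s →
      ∃ w : List I, y ∈ wordMap f w '' E ∧ s ≤ (w.map a).prod ∧ m * (w.map a).prod < s := by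
  intro n
  induction n with
  | zero => intro y _ s _ hs1 hn; rw [pow_zero] at hn; linarith
  | succ n ih =>
    intro y hy s hs0 hs1 hn
    by_cases hms : m < s
    · exact ⟨[], by simpa using hy, by simpa using hs1, by simpa using hms⟩
    obtain ⟨j, y', hy', rfl⟩ : ∃ j, ∃ y' ∈ E, f j y' = y := by simpa using hE hy
    have hsj : s / a j ≤ 1 := (div_le_one (ha j)).2 ((not_lt.1 hms).trans (hm j))
    have hnj : M ^ n < s / a j := by
      rw [lt_div_iff₀ (ha j)]
      calc M ^ n * a j ≤ M ^ n * M := by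
            gcongr
            · exact pow_nonneg ((ha j).le.trans (hM j)) n
            · exact hM j
        _ < s := by rwa [← pow_succ]
    obtain ⟨w, hyw, hsw, hmw⟩ := ih hy' (div_pos hs0 (ha j)) hsj hnj
    refine ⟨j :: w, ?_, ?_, ?_⟩
    · rw [wordMap_cons, image_comp]; exact mem_image_of_mem _ hyw
    · simpa [List.prod_cons, div_le_iff₀' (ha j)] using hsw
    · rw [List.map_cons, List.prod_cons, mul_left_comm]
      simpa [lt_div_iff₀' (ha j)] using hmw

lemma exists_mem_image_wordMap_prod_mem (hE : E ⊆ ⋃ i, f i '' E) (ha : ∀ i, 0 < a i)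
    {m M : ℝ} (hm : ∀ i, m ≤ a i) (hM : ∀ i, a i ≤ M) (hM1 : M < 1)
    {y : X} (hy : y ∈ E) {s : ℝ} (hs0 : 0 < s) (hs1 : s ≤ 1) :
    ∃ w : List I, y ∈ wordMap f w '' E ∧ s ≤ (w.map a).prod ∧ m * (w.map a).prod < s :=
  have ⟨n, hn⟩ := exists_pow_lt_of_lt_one hs0 hM1
  exists_mem_image_wordMap_of_pow_lt hE ha hm hM n hy hs0 hs1 hn

end Cylinders

section Separation

variable {X I : Type*} [MetricSpace X] {f : I → X → X} {a : I → ℝ} {E : Set X}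

lemma exists_pos_le_dist_of_strongSeparation [Finite I] (hEc : IsCompact E)
    (hf : ∀ i, Continuous (f i))
    (hSSC : ∀ i j, f i ≠ f j → Disjoint (f i '' E) (f j '' E)) :
    ∃ δ > 0, ∀ i j, f i ≠ f j → ∀ p ∈ E, ∀ q ∈ E, δ ≤ dist (f i p) (f j q) := by
  have hpair : ∀ ij : I × I, ∀ᶠ δ in 𝓝[>] (0 : ℝ),
      f ij.1 ≠ f ij.2 → ∀ p ∈ E, ∀ q ∈ E, δ ≤ dist (f ij.1 p) (f ij.2 q) := by
    rintro ⟨i, j⟩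
    by_cases hij : f i = f j
    · exact Eventually.of_forall fun _ h => absurd hij h
    obtain ⟨r, hr0, hr⟩ := Metric.exists_pos_forall_lt_edist (hEc.image (hf i))
      (hEc.image (hf j)).isClosed (hSSC i j hij)
    filter_upwards [Ioo_mem_nhdsGT (NNReal.coe_pos.2 hr0)] with δ hδ _ p hp q hq
    have := hr _ (mem_image_of_mem _ hp) _ (mem_image_of_mem _ hq)
    rw [edist_dist, ENNReal.ofReal_coe_nnreal.symm, ENNReal.ofReal_lt_ofReal_iff'] at this
    exact hδ.2.le.trans this.1.le
  obtain ⟨δ, hδ, hδ0⟩ := ((eventually_all.2 hpair).and self_mem_nhdsWithin).exists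
  exact ⟨δ, hδ0, fun i j => hδ (i, j)⟩

lemma mem_image_wordMap_of_dist_lt (hE : E = ⋃ i, f i '' E)
    (hsim : ∀ i x y, dist (f i x) (f i y) = a i * dist x y)
    (ha0 : ∀ i, 0 < a i) (ha1 : ∀ i, a i ≤ 1) {δ : ℝ}
    (hδ : ∀ i j, f i ≠ f j → ∀ p ∈ E, ∀ q ∈ E, δ ≤ dist (f i p) (f j q)) (w : List I) :
    ∀ ξ ∈ wordMap f w '' E, ∀ y ∈ E, dist y ξ < δ * (w.map a).prod → y ∈ wordMap f w '' E := by
  have hfE : ∀ i, f i '' E ⊆ E := fun i =>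
    (subset_iUnion (fun j => f j '' E) i).trans hE.symm.subset
  induction w with
  | nil => intro _ _ y hy _; simpa using hy
  | cons i w ih =>
    rintro _ ⟨ξ, hξ, rfl⟩ y hy hdist
    rw [wordMap_cons, Function.comp_apply] at hdist
    rw [wordMap_cons, image_comp]
    obtain ⟨j, y', hy', rfl⟩ : ∃ j, ∃ y' ∈ E, f j y' = y := by
      rw [hE] at hy; simpa using hy
    rw [List.map_cons, List.prod_cons] at hdist
    by_cases hji : f j = f i
    · rw [hji] at hdist ⊢
      rw [hsim, mul_left_comm, mul_lt_mul_iff_right₀ (ha0 i)] at hdist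
      exact mem_image_of_mem _ (ih _ (mem_image_of_mem _ hξ) y' hy' hdist)
    · have hsep := hδ j i hji y' hy' _ (image_wordMap_subset hfE w (mem_image_of_mem _ hξ))
      have hP0 : 0 < a i * (w.map a).prod :=
        mul_pos (ha0 i) (List.prod_pos (by simpa using fun k _ => ha0 k))
      have hP1 : a i * (w.map a).prod ≤ 1 :=
        List.prod_map_le_one (fun k => (ha0 k).le) ha1 (i :: w)
      have hδ0 : 0 < δ := pos_of_mul_pos_left (dist_nonneg.trans_lt hdist) hP0.le
      exact (hsep.trans_lt (hdist.trans_le (mul_le_of_le_one_right hδ0.le hP1))).false.elim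

theorem exists_wordMap_ball_inter_subset [Finite I] [Nonempty I] (hEc : IsCompact E)
    (hE : E = ⋃ i, f i '' E) (hsim : ∀ i x y, dist (f i x) (f i y) = a i * dist x y)
    (ha0 : ∀ i, 0 < a i) (ha1 : ∀ i, a i < 1)
    (hSSC : ∀ i j, f i ≠ f j → Disjoint (f i '' E) (f j '' E)) :
    ∃ C > 0, ∀ x ∈ E, ∀ r > 0, ∃ w : List I,
      (w.map a).prod ≤ C * r ∧ ball x r ∩ E ⊆ wordMap f w '' E := by
  have hf : ∀ i, Continuous (f i) := fun i =>
    (LipschitzWith.of_dist_le_mul fun x y => (hsim i x y).trans_le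
      (by rw [Real.coe_toNNReal _ (ha0 i).le])).continuous
  obtain ⟨δ, hδ0, hδ⟩ := exists_pos_le_dist_of_strongSeparation hEc hf hSSC
  obtain ⟨imin, himin⟩ := Finite.exists_min a
  obtain ⟨imax, himax⟩ := Finite.exists_max a
  refine ⟨(δ * a imin)⁻¹, by have := ha0 imin; positivity, fun x hx r hr => ?_⟩
  by_cases hrδ : δ < r
  · refine ⟨[], ?_, by simp⟩
    rw [List.map_nil, List.prod_nil, inv_mul_eq_div, one_le_div (by have := ha0 imin; positivity)]
    exact (mul_le_of_le_one_right hδ0.le (ha1 imin).le).trans hrδ.le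
  obtain ⟨w, hxw, hrw, hwr⟩ := exists_mem_image_wordMap_prod_mem hE.subset ha0 himin himax
    (ha1 imax) hx (div_pos hr hδ0) ((div_le_one hδ0).2 (not_lt.1 hrδ))
  refine ⟨w, ?_, fun y ⟨hyx, hyE⟩ =>
    mem_image_wordMap_of_dist_lt hE hsim ha0 (fun i => (ha1 i).le) hδ w x hxw y hyE ?_⟩
  · rw [le_inv_mul_iff₀ (mul_pos hδ0 (ha0 imin))]
    rw [lt_div_iff₀ hδ0] at hwr
    linarith
  · exact (mem_ball.1 hyx).trans_le ((div_le_iff₀' hδ0).1 hrw)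

end Separation

theorem stmt15_general {I : Type*} [Fintype I] [Nonempty I]
    (a b d₁ d₂ : I → ℝ)
    (hab : ∀ i, 0 < b i ∧ b i < a i ∧ a i < 1)
    (T : I → ℝ × ℝ → ℝ × ℝ)
    (hT : ∀ i p, T i p = (a i * p.1 + d₁ i, b i * p.2 + d₂ i))
    (K : Set (ℝ × ℝ)) (hKc : IsCompact K)
    (hKinv : K = ⋃ i, T i '' K)
    (Kη : Set ℝ) (hKη : Kη = Prod.fst '' K)
    (hSSC : ∀ i j, ¬(a i = a j ∧ d₁ i = d₁ j) →
      Disjoint ((fun x => a i * x + d₁ i) '' Kη) ((fun x => a j * x + d₁ j) '' Kη)) :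
    ∃ C : ℝ, 0 < C ∧ ∀ x ∈ K, ∀ r : ℝ, 0 < r → r < 1 →
      ∃ w : List I,
        (w.map a).prod ≤ C * r ∧
        ball x.1 r ∩ Kη ⊆
          (w.foldr (fun i f => (fun y => a i * y + d₁ i) ∘ f) id) '' Kη := by
  have ha0 : ∀ i, 0 < a i := fun i => (hab i).1.trans (hab i).2.1
  have hKηinv : Kη = ⋃ i, (fun y => a i * y + d₁ i) '' Kη := by
    subst hKη
    conv_lhs => rw [hKinv]
    simp only [image_iUnion, image_image, hT]
  have hsim : ∀ i x y, dist (a i * x + d₁ i) (a i * y + d₁ i) = a i * dist x y := fun i x y => by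
    rw [Real.dist_eq, Real.dist_eq, add_sub_add_right_eq_sub, ← mul_sub, abs_mul,
      abs_of_pos (ha0 i)]
  obtain ⟨C, hC, hreg⟩ := exists_wordMap_ball_inter_subset (hKη ▸ hKc.image continuous_fst)
    hKηinv hsim ha0 (fun i => (hab i).2.2)
    fun i j hij => hSSC i j fun ⟨ha, hd⟩ => hij (by rw [ha, hd])
  exact ⟨C, hC, fun x hx r hr _ => hreg x.1 (hKη ▸ mem_image_of_mem _ hx) r hr⟩

/-- For a Gatzouras–Lalley IFS whose projected system satisfies the strong separation
condition, every point of the attractor `K` is regular: there is a constant `C > 0`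
such that for every `x ∈ K` and `r ∈ (0,1)` there is a finite word `w` with contraction
`a_w ≤ C r` whose projected cylinder captures `B(η(x), r) ∩ η(K)`. -/
theorem stmt15 {I : Type*} [Fintype I] [Nonempty I]
    (a b d₁ d₂ : I → ℝ)
    (hab : ∀ i, 0 < b i ∧ b i < a i ∧ a i < 1)
    (T : I → ℝ × ℝ → ℝ × ℝ)
    (hT : ∀ i p, T i p = (a i * p.1 + d₁ i, b i * p.2 + d₂ i))
    (hself : ∀ i, T i '' (Icc (0:ℝ) 1 ×ˢ Icc (0:ℝ) 1) ⊆ Icc (0:ℝ) 1 ×ˢ Icc (0:ℝ) 1)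
    (hdisj : ∀ i j, i ≠ j →
      Disjoint (T i '' (Ioo (0:ℝ) 1 ×ˢ Ioo (0:ℝ) 1)) (T j '' (Ioo (0:ℝ) 1 ×ˢ Ioo (0:ℝ) 1)))
    (hcol : ∀ i j, (a i = a j ∧ d₁ i = d₁ j) ∨
      Disjoint (Ioo (d₁ i) (d₁ i + a i)) (Ioo (d₁ j) (d₁ j + a j)))
    (K : Set (ℝ × ℝ)) (hKc : IsCompact K) (hKne : K.Nonempty)
    (hKsub : K ⊆ Icc (0:ℝ) 1 ×ˢ Icc (0:ℝ) 1)
    (hKinv : K = ⋃ i, T i '' K)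
    (Kη : Set ℝ) (hKη : Kη = Prod.fst '' K)
    (hSSC : ∀ i j, ¬(a i = a j ∧ d₁ i = d₁ j) →
      Disjoint ((fun x => a i * x + d₁ i) '' Kη) ((fun x => a j * x + d₁ j) '' Kη)) :
    ∃ C : ℝ, 0 < C ∧ ∀ x ∈ K, ∀ r : ℝ, 0 < r → r < 1 →
      ∃ w : List I,
        (w.map a).prod ≤ C * r ∧
        ball x.1 r ∩ Kη ⊆
          (w.foldr (fun i f => (fun y => a i * y + d₁ i) ∘ f) id) '' Kη :=
  stmt15_general a b d₁ d₂ hab T hT K hKc hKinv Kη hKη hSSC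
end
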